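/- For any 1 ≤ q ≤ p and d ∈ (0,1], A_p(n, d) ≤ A_q(n, d^{p/q}). -/

import Mathlib

noncomputable def lpNorm (p : ℝ) {n : ℕ} (x : Fin n → ℝ) : ℝ :=
  (∑ i, |x i| ^ p) ^ (1/p)

noncomputable def lpDist (p : ℝ) {n : ℕ} (u v : Fin n → ℝ) : ℝ :=
  lpNorm p (u - v)

/-- `A_p(n, d)`. -/
noncomputable def lpCodeMax (p : ℝ) (n : ℕ) (d : ℝ) : ℕ :=
  sSup {k : ℕ | ∃ C : Finset (Fin n → ℝ), C.card = k ∧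
    (∀ u ∈ C, lpNorm p u = 1) ∧
    (∀ u ∈ C, ∀ v ∈ C, u ≠ v → 2 * d ≤ lpDist p u v)}

/-!
The coordinatewise signed power `φ(t) = sign t · |t| ^ α`, `α = p / q ≥ 1`, maps the unit
`ℓ_p`-sphere into the unit `ℓ_q`-sphere because `|φ t| ^ q = |t| ^ p`. It also expands distances:
`|φ a - φ b| ≥ 2 ^ (1 - α) |a - b| ^ α`, by superadditivity of `t ↦ t ^ α` when `a` and `b` have
the same sign and by its convexity when they do not. Summing over coordinates,
`‖φ u - φ v‖_q ≥ 2 ^ (1 - α) ‖u - v‖_p ^ α ≥ 2 d ^ α` whenever `‖u - v‖_p ≥ 2 d`, so `φ` sends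
codes to codes of the same size. Since `lpCodeMax` is an `sSup` in `ℕ`, the comparison also needs
the sizes of `ℓ_q`-codes to be bounded, which follows from compactness of the sphere.
-/

theorem Real.add_rpow_le_two_rpow_mul_rpow_add_rpow {p a b : ℝ} (ha : 0 ≤ a) (hb : 0 ≤ b)
    (hp : 1 ≤ p) : (a + b) ^ p ≤ 2 ^ (p - 1) * (a ^ p + b ^ p) := by
  lift a to NNReal using ha
  lift b to NNReal using hb
  exact_mod_cast NNReal.rpow_add_le_mul_rpow_add_rpow a b hp

noncomputable def signedRpow (α t : ℝ) : ℝ := if 0 ≤ t then t ^ α else -(-t) ^ α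

section signedRpow

variable {α : ℝ}

theorem abs_signedRpow (α t : ℝ) : |signedRpow α t| = |t| ^ α := by
  unfold signedRpow
  split_ifs with ht
  · rw [abs_of_nonneg (by positivity), abs_of_nonneg ht]
  · rw [abs_neg, abs_of_nonneg (Real.rpow_nonneg (by linarith) α), abs_of_neg (not_le.1 ht)]

theorem signedRpow_neg (hα : α ≠ 0) (t : ℝ) : signedRpow α (-t) = -signedRpow α t := by
  unfold signedRpow
  rcases lt_trichotomy t 0 with ht | rfl | ht
  · simp [not_le.2 ht, neg_nonneg.2 ht.le]
  · simp [Real.zero_rpow hα]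
  · simp [ht.le, not_le.2 (neg_neg_of_pos ht)]

theorem rpow_sub_le_signedRpow_sub (hα : 1 ≤ α) {a b : ℝ} (hb : 0 ≤ b) (hab : b ≤ a) :
    (a - b) ^ α ≤ signedRpow α a - signedRpow α b := by
  have h := Real.add_rpow_le_rpow_add (sub_nonneg.2 hab) hb hα
  rw [sub_add_cancel] at h
  simp only [signedRpow, if_pos hb, if_pos (hb.trans hab)]
  linarith

theorem two_rpow_mul_rpow_sub_le_signedRpow_sub (hα : 1 ≤ α) {a b : ℝ} (hab : b ≤ a) :
    2 ^ (1 - α) * (a - b) ^ α ≤ signedRpow α a - signedRpow α b := by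
  have h2 : (2 : ℝ) ^ (1 - α) ≤ 1 := Real.rpow_le_one_of_one_le_of_nonpos one_le_two (by linarith)
  have hsub : 0 ≤ (a - b) ^ α := by have := sub_nonneg.2 hab; positivity
  by_cases hb : 0 ≤ b
  · nlinarith [rpow_sub_le_signedRpow_sub hα hb hab]
  by_cases ha : a ≤ 0
  · have h := rpow_sub_le_signedRpow_sub hα (neg_nonneg.2 ha) (neg_le_neg hab)
    rw [signedRpow_neg (by linarith), signedRpow_neg (by linarith), neg_sub_neg] at h
    nlinarith
  push Not at ha hb
  have hconv := Real.add_rpow_le_two_rpow_mul_rpow_add_rpow ha.le (neg_nonneg.2 hb.le) hα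
  have hcancel : (2 : ℝ) ^ (1 - α) * 2 ^ (α - 1) = 1 := by
    rw [← Real.rpow_add two_pos]; norm_num
  calc 2 ^ (1 - α) * (a - b) ^ α ≤ 2 ^ (1 - α) * (2 ^ (α - 1) * (a ^ α + (-b) ^ α)) := by
        gcongr; rwa [sub_eq_add_neg]
    _ = signedRpow α a - signedRpow α b := by
        rw [← mul_assoc, hcancel, one_mul, signedRpow, signedRpow, if_pos ha.le,
          if_neg (not_le.2 hb), sub_neg_eq_add]

theorem two_rpow_mul_abs_sub_rpow_le (hα : 1 ≤ α) (a b : ℝ) :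
    2 ^ (1 - α) * |a - b| ^ α ≤ |signedRpow α a - signedRpow α b| := by
  rcases le_total b a with hab | hab
  · rw [abs_of_nonneg (sub_nonneg.2 hab)]
    exact (two_rpow_mul_rpow_sub_le_signedRpow_sub hα hab).trans (le_abs_self _)
  · rw [abs_sub_comm, abs_sub_comm (signedRpow α a), abs_of_nonneg (sub_nonneg.2 hab)]
    exact (two_rpow_mul_rpow_sub_le_signedRpow_sub hα hab).trans (le_abs_self _)

end signedRpow

section lpNorm

variable {n : ℕ} {p q : ℝ} {x y : Fin n → ℝ}

theorem lpNorm_congr_abs (h : ∀ i, |x i| = |y i|) : lpNorm p x = lpNorm p y := by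
  simp only [lpNorm, h]

theorem lpNorm_le_lpNorm_of_abs_le (hp : 0 ≤ p) (h : ∀ i, |x i| ≤ |y i|) :
    lpNorm p x ≤ lpNorm p y := by
  unfold lpNorm
  refine Real.rpow_le_rpow (Finset.sum_nonneg fun i _ => by positivity)
    (Finset.sum_le_sum fun i _ => Real.rpow_le_rpow (abs_nonneg _) (h i) hp) (by positivity)

theorem lpNorm_const_mul_abs_rpow {c : ℝ} (hc : 0 ≤ c) (hp : 0 < p) (hq : 0 < q) :
    lpNorm q (fun i => c * |x i| ^ (p / q)) = c * lpNorm p x ^ (p / q) := by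
  have hS : 0 ≤ ∑ i, |x i| ^ p := Finset.sum_nonneg fun i _ => by positivity
  have hterm : ∀ i, |c * |x i| ^ (p / q)| ^ q = c ^ q * |x i| ^ p := fun i => by
    rw [abs_of_nonneg (by positivity), Real.mul_rpow hc (by positivity), ← Real.rpow_mul
      (abs_nonneg _), div_mul_cancel₀ p hq.ne']
  simp only [lpNorm, hterm, ← Finset.mul_sum]
  rw [Real.mul_rpow (by positivity) hS, ← Real.rpow_mul hc, mul_one_div_cancel hq.ne',
    Real.rpow_one, ← Real.rpow_mul hS, one_div_mul_eq_div]
  congr 2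
  field_simp

theorem lpDist_self (hq : q ≠ 0) (u : Fin n → ℝ) : lpDist q u u = 0 := by
  simp [lpDist, lpNorm, Real.zero_rpow hq, Real.zero_rpow (inv_ne_zero hq)]

theorem lpNorm_signedRpow_comp (hp : 0 < p) (hq : 0 < q) (x : Fin n → ℝ) :
    lpNorm q (signedRpow (p / q) ∘ x) = lpNorm p x ^ (p / q) := by
  rw [lpNorm_congr_abs (y := fun i => 1 * |x i| ^ (p / q)) fun i => by
      rw [Function.comp_apply, abs_signedRpow, one_mul]
      exact (abs_of_nonneg (by positivity)).symm,
    lpNorm_const_mul_abs_rpow zero_le_one hp hq, one_mul]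

theorem two_rpow_mul_lpDist_rpow_le_lpDist_signedRpow_comp (hq : 0 < q) (hqp : q ≤ p)
    (u v : Fin n → ℝ) :
    2 ^ (1 - p / q) * lpDist p u v ^ (p / q) ≤
      lpDist q (signedRpow (p / q) ∘ u) (signedRpow (p / q) ∘ v) := by
  rw [lpDist, lpDist, ← lpNorm_const_mul_abs_rpow (by positivity) (hq.trans_le hqp) hq]
  refine lpNorm_le_lpNorm_of_abs_le hq.le fun i => ?_
  rw [abs_of_nonneg (by positivity)]
  exact two_rpow_mul_abs_sub_rpow_le ((one_le_div hq).2 hqp) (u i) (v i)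

end lpNorm

theorem Metric.exists_card_le_of_isCompact {X : Type*} [PseudoMetricSpace X] {K : Set X}
    (hK : IsCompact K) {ε : ℝ} (hε : 0 < ε) :
    ∃ N : ℕ, ∀ C : Finset X, ↑C ⊆ K → (∀ x ∈ C, ∀ y ∈ C, x ≠ y → ε ≤ dist x y) →
      C.card ≤ N := by
  obtain ⟨N, -, hNfin, hN⟩ :=
    exists_finite_isCover_of_isCompact (ε := (ε / 3).toNNReal) (by simpa using hε) hK
  refine ⟨N.ncard, fun C hCK hC => ?_⟩
  have hsep : IsSeparated (2 * (ε / 3).toNNReal : NNReal) (C : Set X) := by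
    intro x hx y hy hxy
    rw [edist_dist, ← ENNReal.ofReal_coe_nnreal,
      ENNReal.ofReal_lt_ofReal_iff (hε.trans_le (hC x hx y hy hxy))]
    push_cast
    rw [Real.coe_toNNReal _ (by positivity)]
    linarith [hC x hx y hy hxy]
  have hcard := (hsep.encard_le_packingNumber hCK).trans
    ((packingNumber_two_mul_le_externalCoveringNumber _ _).trans
      hN.externalCoveringNumber_le_encard)
  rw [Set.encard_coe_eq_coe_finsetCard, ← hNfin.cast_ncard_eq] at hcard
  exact_mod_cast hcard

theorem PiLp.norm_toLp_eq_lpNorm {p : ENNReal} (hp : 0 < p.toReal) {n : ℕ} (x : Fin n → ℝ) :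
    ‖WithLp.toLp p x‖ = lpNorm p.toReal x := by
  simp [PiLp.norm_eq_sum hp, lpNorm, Real.norm_eq_abs]

theorem PiLp.dist_toLp_eq_lpDist {p : ENNReal} [Fact (1 ≤ p)] (hp : p ≠ ⊤) {n : ℕ}
    (u v : Fin n → ℝ) : dist (WithLp.toLp p u) (WithLp.toLp p v) = lpDist p.toReal u v := by
  rw [dist_eq_norm, ← WithLp.toLp_sub, norm_toLp_eq_lpNorm, lpDist]
  exact ENNReal.toReal_pos (zero_lt_one.trans_le Fact.out).ne' hp

theorem bddAbove_lpCode_card {q d : ℝ} (hq : 1 ≤ q) (hd : 0 < d) (n : ℕ) :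
    BddAbove {k : ℕ | ∃ C : Finset (Fin n → ℝ), C.card = k ∧
      (∀ u ∈ C, lpNorm q u = 1) ∧ (∀ u ∈ C, ∀ v ∈ C, u ≠ v → 2 * d ≤ lpDist q u v)} := by
  have hq0 : 0 < q := by linarith
  have : Fact (1 ≤ ENNReal.ofReal q) := ⟨by simpa using hq⟩
  have hq' : (ENNReal.ofReal q).toReal = q := ENNReal.toReal_ofReal hq0.le
  obtain ⟨N, hN⟩ := Metric.exists_card_le_of_isCompact
    (isCompact_sphere (0 : PiLp (ENNReal.ofReal q) fun _ : Fin n => ℝ) 1) (mul_pos two_pos hd)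
  refine ⟨N, ?_⟩
  rintro k ⟨C, rfl, hC1, hCd⟩
  rw [← Finset.card_image_of_injective C (WithLp.toLp_injective (ENNReal.ofReal q))]
  apply hN
  · simp only [Finset.coe_image, Set.image_subset_iff]
    intro x hx
    simp [PiLp.norm_toLp_eq_lpNorm (hq'.symm ▸ hq0), hq', hC1 x hx]
  · simp only [Finset.mem_image]
    rintro _ ⟨u, hu, rfl⟩ _ ⟨v, hv, rfl⟩ huv
    rw [PiLp.dist_toLp_eq_lpDist ENNReal.ofReal_ne_top, hq']
    exact hCd u hu v hv fun h => huv (h ▸ rfl)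

theorem lpCodeMax_le_lpCodeMax_of_map {p q d d' : ℝ} {n : ℕ} (hq : 1 ≤ q) (hd' : 0 < d')
    (f : (Fin n → ℝ) → Fin n → ℝ) (hf_norm : ∀ x, lpNorm p x = 1 → lpNorm q (f x) = 1)
    (hf_dist : ∀ u v, 2 * d ≤ lpDist p u v → 2 * d' ≤ lpDist q (f u) (f v)) :
    lpCodeMax p n d ≤ lpCodeMax q n d' := by
  refine csSup_le_csSup (bddAbove_lpCode_card hq hd' n) ⟨0, ∅, by simp⟩ ?_
  rintro k ⟨C, rfl, hC1, hCd⟩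
  have hinj : Set.InjOn f C := fun u hu v hv huv => by
    by_contra hne
    have := hf_dist u v (hCd u hu v hv hne)
    rw [huv, lpDist_self (by linarith)] at this
    linarith
  refine ⟨C.image f, Finset.card_image_of_injOn hinj, ?_, ?_⟩
  · simp only [Finset.mem_image]
    rintro _ ⟨x, hx, rfl⟩
    exact hf_norm x (hC1 x hx)
  · simp only [Finset.mem_image]
    rintro _ ⟨u, hu, rfl⟩ _ ⟨v, hv, rfl⟩ huv
    exact hf_dist u v (hCd u hu v hv fun h => huv (h ▸ rfl))

theorem stmt12_general (p q d : ℝ) (hq : 1 ≤ q) (hpq : q ≤ p) (hd0 : 0 < d)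
    (n : ℕ) : lpCodeMax p n d ≤ lpCodeMax q n (d ^ (p / q)) := by
  have hq0 : 0 < q := by linarith
  have hp0 : 0 < p := by linarith
  refine lpCodeMax_le_lpCodeMax_of_map hq (by positivity) (fun x => signedRpow (p / q) ∘ x)
    (fun x hx => by rw [lpNorm_signedRpow_comp hp0 hq0, hx, Real.one_rpow]) fun u v huv => ?_
  calc 2 * d ^ (p / q) = 2 ^ (1 - p / q) * (2 * d) ^ (p / q) := by
        rw [Real.mul_rpow zero_le_two hd0.le, ← mul_assoc, ← Real.rpow_add two_pos]; norm_num
    _ ≤ 2 ^ (1 - p / q) * lpDist p u v ^ (p / q) := by gcongr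
    _ ≤ _ := two_rpow_mul_lpDist_rpow_le_lpDist_signedRpow_comp hq0 hpq u v

theorem stmt12 (p q d : ℝ) (hq : 1 ≤ q) (hpq : q ≤ p) (hd0 : 0 < d) (hd1 : d ≤ 1)
    (n : ℕ) : lpCodeMax p n d ≤ lpCodeMax q n (d ^ (p / q)) :=
  stmt12_general p q d hq hpq hd0 n
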